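/- For a smooth unit vector field n : ℝ³ → ℝ³, the pointwise identity holds: |∇n|² = (∇·n)² + (n·∇×n)² + |n×(∇×n)|² + ∇·[(n·∇)n − (∇·n)n]. -/

import Mathlib

open Matrix

noncomputable section

/-- Partial derivative `∂ⱼ f` of a scalar function on `ℝ³`. -/
def pd (f : (Fin 3 → ℝ) → ℝ) (j : Fin 3) (x : Fin 3 → ℝ) : ℝ :=
  fderiv ℝ f x (Pi.single j 1)

/-- Divergence `∇·v` of a vector field on `ℝ³`. -/
def divg (v : (Fin 3 → ℝ) → Fin 3 → ℝ) (x : Fin 3 → ℝ) : ℝ :=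
  ∑ j, pd (fun y => v y j) j x

/-- Curl `∇×v` of a vector field on `ℝ³`. -/
def curl (v : (Fin 3 → ℝ) → Fin 3 → ℝ) (x : Fin 3 → ℝ) : Fin 3 → ℝ :=
  ![pd (fun y => v y 2) 1 x - pd (fun y => v y 1) 2 x,
    pd (fun y => v y 0) 2 x - pd (fun y => v y 2) 0 x,
    pd (fun y => v y 1) 0 x - pd (fun y => v y 0) 1 x]

/-- `|∇v|² = Σ_{i,k} (∂ᵢ v_k)²`. -/
def gradsq (v : (Fin 3 → ℝ) → Fin 3 → ℝ) (x : Fin 3 → ℝ) : ℝ :=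
  ∑ i, ∑ j, (pd (fun y => v y i) j x) ^ 2

/-- Convective term `(v·∇)v`. -/
def convec (v : (Fin 3 → ℝ) → Fin 3 → ℝ) (y : Fin 3 → ℝ) : Fin 3 → ℝ :=
  fun i => ∑ j, v y j * pd (fun z => v z i) j y

/-- Surface (null Lagrangian) term `∇·[(v·∇)v − (∇·v)v]`. -/
def surfT (v : (Fin 3 → ℝ) → Fin 3 → ℝ) (x : Fin 3 → ℝ) : ℝ :=
  divg (fun y => convec v y - divg v y • v y) x


private lemma pd_contDiff' {f : (Fin 3 → ℝ) → ℝ} (hf : ContDiff ℝ (⊤ : ℕ∞) f) (j : Fin 3) :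
    ContDiff ℝ (⊤ : ℕ∞) (pd f j) := by
  have h : ContDiff ℝ (⊤ : ℕ∞) (fderiv ℝ f) := hf.fderiv_right (by exact_mod_cast le_top)
  exact h.clm_apply contDiff_const

private lemma pd_sub' {f g : (Fin 3 → ℝ) → ℝ} {x : Fin 3 → ℝ} (hf : DifferentiableAt ℝ f x)
    (hg : DifferentiableAt ℝ g x) (j : Fin 3) :
    pd (fun y => f y - g y) j x = pd f j x - pd g j x := by
  simp [pd, fderiv_fun_sub hf hg]

private lemma pd_mul' {f g : (Fin 3 → ℝ) → ℝ} {x : Fin 3 → ℝ} (hf : DifferentiableAt ℝ f x)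
    (hg : DifferentiableAt ℝ g x) (j : Fin 3) :
    pd (fun y => f y * g y) j x = f x * pd g j x + pd f j x * g x := by
  simp [pd, fderiv_fun_mul hf hg, mul_comm]

private lemma pd_sum' {g : Fin 3 → (Fin 3 → ℝ) → ℝ} {x : Fin 3 → ℝ}
    (hg : ∀ k, DifferentiableAt ℝ (g k) x) (j : Fin 3) :
    pd (fun y => ∑ k, g k y) j x = ∑ k, pd (g k) j x := by
  simp [pd, fderiv_fun_sum (fun k _ => hg k)]

private lemma pd_symm' {f : (Fin 3 → ℝ) → ℝ} (hf : ContDiff ℝ (⊤ : ℕ∞) f) (i j : Fin 3)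
    (x : Fin 3 → ℝ) :
    pd (fun y => pd f j y) i x = pd (fun y => pd f i y) j x := by
  have hd : ContDiff ℝ (⊤ : ℕ∞) (fderiv ℝ f) := hf.fderiv_right (by exact_mod_cast le_top)
  have h1 : ∀ (v w : Fin 3 → ℝ), fderiv ℝ (fun y => fderiv ℝ f y v) x w
      = fderiv ℝ (fderiv ℝ f) x w v := by
    intro v w
    rw [fderiv_clm_apply (hd.differentiable (by simp) x) (differentiableAt_const v)]
    simp
  have hsymm : IsSymmSndFDerivAt ℝ f x :=
    hf.contDiffAt.isSymmSndFDerivAt (by rw [minSmoothness_of_isRCLikeNormedField]; exact WithTop.coe_le_coe.mpr (le_top : (2 : ℕ∞) ≤ ⊤))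
  simp only [pd]
  rw [h1, h1, hsymm]

private lemma surfT_eq' (n : (Fin 3 → ℝ) → Fin 3 → ℝ) (hsmooth : ContDiff ℝ (⊤ : ℕ∞) n)
    (x : Fin 3 → ℝ) :
    surfT n x = (∑ i, ∑ j, pd (fun y => n y j) i x * pd (fun y => n y i) j x)
      - (divg n x) ^ 2 := by
  have hnc : ∀ i, ContDiff ℝ (⊤ : ℕ∞) (fun y => n y i) := fun i => contDiff_pi.1 hsmooth i
  have hp : ∀ i j, ContDiff ℝ (⊤ : ℕ∞) (pd (fun y => n y i) j) := fun i j => pd_contDiff' (hnc i) j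
  have hdn : ∀ i (y : Fin 3 → ℝ), DifferentiableAt ℝ (fun z => n z i) y :=
    fun i y => (hnc i).differentiable (by simp) y
  have hdp : ∀ i j (y : Fin 3 → ℝ), DifferentiableAt ℝ (pd (fun z => n z i) j) y :=
    fun i j y => (hp i j).differentiable (by simp) y
  have hdconv : ∀ i (y : Fin 3 → ℝ),
      DifferentiableAt ℝ (fun z => ∑ j, n z j * pd (fun w => n w i) j z) y := by
    intro i y
    exact DifferentiableAt.fun_sum fun j _ => (hdn j y).mul (hdp i j y)
  have hddivg : ∀ (y : Fin 3 → ℝ), DifferentiableAt ℝ (divg n) y := by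
    intro y
    exact DifferentiableAt.fun_sum fun j _ => hdp j j y
  have step : ∀ i, pd (fun y => convec n y i - divg n y * n y i) i x
      = (∑ j, (n x j * pd (fun y => pd (fun z => n z i) j y) i x
            + pd (fun y => n y j) i x * pd (fun y => n y i) j x))
        - (divg n x * pd (fun y => n y i) i x
            + (∑ j, pd (fun y => pd (fun z => n z j) j y) i x) * n x i) := by
    intro i
    rw [pd_sub' (f := fun y => convec n y i) (g := fun y => divg n y * n y i)
        (hdconv i x) ((hddivg x).mul (hdn i x))]
    congr 1
    · rw [show (fun y => convec n y i) = fun y => ∑ j, n y j * pd (fun z => n z i) j y from rfl,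
        pd_sum' (g := fun j y => n y j * pd (fun z => n z i) j y) (fun j => (hdn j x).mul (hdp i j x))]
      exact Finset.sum_congr rfl fun j _ => pd_mul' (hdn j x) (hdp i j x) i
    · rw [pd_mul' (hddivg x) (hdn i x)]
      congr 2
      rw [show divg n = fun y => ∑ j, pd (fun z => n z j) j y from rfl,
        pd_sum' (fun j => hdp j j x)]
  have hsurf : surfT n x = ∑ i, pd (fun y => convec n y i - divg n y * n y i) i x := by
    simp only [surfT, divg, Pi.sub_apply, Pi.smul_apply, smul_eq_mul]
  rw [hsurf]
  simp only [step]
  have hq : ∀ i j, pd (fun y => pd (fun z => n z i) j y) i x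
      = pd (fun y => pd (fun z => n z i) i y) j x := fun i j => pd_symm' (hnc i) i j x
  simp only [Fin.sum_univ_three, divg, hq]
  ring

/-- Classical Frank-elasticity decomposition identity: for a smooth unit vector
field `n : ℝ³ → ℝ³`,
`|∇n|² = (∇·n)² + (n·∇×n)² + |n×(∇×n)|² + ∇·[(n·∇)n − (∇·n)n]` pointwise. -/
theorem stmt9 (n : (Fin 3 → ℝ) → Fin 3 → ℝ)
    (hsmooth : ContDiff ℝ (⊤ : ℕ∞) n) (hunit : ∀ x, n x ⬝ᵥ n x = 1) :
    ∀ x, gradsq n x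
      = (divg n x) ^ 2 + (n x ⬝ᵥ curl n x) ^ 2
        + crossProduct (n x) (curl n x) ⬝ᵥ crossProduct (n x) (curl n x)
        + surfT n x := by
  intro x
  have h := hunit x
  simp only [dotProduct, Fin.sum_univ_three] at h
  rw [surfT_eq' n hsmooth x]
  simp only [gradsq, divg, curl, dotProduct, cross_apply, Fin.sum_univ_three,
    Matrix.cons_val_zero, Matrix.cons_val_one, Matrix.head_cons, Matrix.cons_val_two,
    Matrix.tail_cons]
  linear_combination (-((pd (fun y => n y 2) 1 x - pd (fun y => n y 1) 2 x) ^ 2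
    + (pd (fun y => n y 0) 2 x - pd (fun y => n y 2) 0 x) ^ 2
    + (pd (fun y => n y 1) 0 x - pd (fun y => n y 0) 1 x) ^ 2)) * h

end
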